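/- arXiv:2604.16080 — 2 statements merged into one kernel-verified Lean document; each statement's English description precedes it below -/
import Mathlib

section
/- Let S and S' be finite sets (of map entries) and consider a sequence of atomic single-element map operations that starts from S, first inserts the elements of S' \ S one at a time (in any order), and then deletes the elements of S \ S' one at a time (in any order), ending at S'. Then every intermediate set M in the sequence satisfies M ⊆ S ∪ S', and moreover S ⊆ M or S' ⊆ M (hence in particular S ∩ S' ⊆ M). -/
/-- An atomic single-element map operation: delete or insert one entry. -/
inductive MapOp (α : Type*) where
  | del (a : α)
  | ins (a : α)

/-- Apply an atomic operation to a map state (a finite set of entries). -/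
def MapOp.apply {α : Type*} [DecidableEq α] : MapOp α → Finset α → Finset α
  | .del a, M => M.erase a
  | .ins a, M => insert a M

/-- All states visited while executing a list of operations from an initial state
(including the initial and final states). -/
def mapStates {α : Type*} [DecidableEq α] (ops : List (MapOp α)) (init : Finset α) :
    List (Finset α) :=
  ops.scanl (fun M op => op.apply M) init


/-! The insertion phase only adds elements of `S' \ S` to `S`, so every state lies between `S`
and `S ∪ S'`; it ends at `S ∪ S'`, and the deletion phase only removes elements of `S \ S'`,
so every later state lies between `(S ∪ S') \ (S \ S') = S'` and `S ∪ S'`. -/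

namespace MapOp

variable {α : Type*} [DecidableEq α]

theorem mem_mapStates_iff {ops : List (MapOp α)} {M N : Finset α} :
    N ∈ mapStates ops M ↔
      ∃ i ≤ ops.length, N = (ops.take i).foldl (fun M op => op.apply M) M := by
  simp only [mapStates, List.mem_iff_getElem, List.getElem_scanl, List.length_scanl,
    Nat.lt_add_one_iff, exists_prop, eq_comm]

theorem mem_or_mem_of_mem_mapStates_append {ops₁ ops₂ : List (MapOp α)} {M N : Finset α}
    (h : N ∈ mapStates (ops₁ ++ ops₂) M) :
    N ∈ mapStates ops₁ M ∨
      N ∈ mapStates ops₂ (ops₁.foldl (fun M op => op.apply M) M) := by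
  rw [mapStates, List.scanl_append, List.mem_append] at h
  exact h.imp id List.mem_of_mem_tail

theorem foldl_apply_map_ins (l : List α) (M : Finset α) :
    (l.map ins).foldl (fun M op => op.apply M) M = M ∪ l.toFinset := by
  induction l generalizing M with
  | nil => simp
  | cons a l ih =>
    rw [List.map_cons, List.foldl_cons, ih, List.toFinset_cons, Finset.union_insert]
    exact Finset.insert_union a M l.toFinset

theorem foldl_apply_map_del (l : List α) (M : Finset α) :
    (l.map del).foldl (fun M op => op.apply M) M = M \ l.toFinset := by
  induction l generalizing M with
  | nil => simp
  | cons a l ih =>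
    rw [List.map_cons, List.foldl_cons, ih, List.toFinset_cons, Finset.sdiff_insert]
    exact Finset.erase_sdiff_comm M l.toFinset a

theorem subset_and_subset_of_mem_mapStates_map_ins {l : List α} {M N : Finset α}
    (h : N ∈ mapStates (l.map ins) M) : M ⊆ N ∧ N ⊆ M ∪ l.toFinset := by
  obtain ⟨i, -, rfl⟩ := mem_mapStates_iff.1 h
  rw [← List.map_take, foldl_apply_map_ins]
  exact ⟨Finset.subset_union_left,
    Finset.union_subset_union_right (Multiset.toFinset_subset.2 (List.take_subset i l))⟩

theorem subset_and_subset_of_mem_mapStates_map_del {l : List α} {M N : Finset α}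
    (h : N ∈ mapStates (l.map del) M) : M \ l.toFinset ⊆ N ∧ N ⊆ M := by
  obtain ⟨i, -, rfl⟩ := mem_mapStates_iff.1 h
  rw [← List.map_take, foldl_apply_map_del]
  exact ⟨Finset.sdiff_subset_sdiff subset_rfl (Multiset.toFinset_subset.2 (List.take_subset i l)),
    Finset.sdiff_subset⟩

end MapOp

/-- Fail-closed insert-before-delete update ordering.
Starting from `S`, first insert the elements of `S' \ S` one at a time (in any order),
then delete the elements of `S \ S'` one at a time (in any order).  The sequence ends at
`S'`, every intermediate state `M` satisfies `M ⊆ S ∪ S'`, and every intermediate state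
satisfies `S ⊆ M` or `S' ⊆ M` (hence `S ∩ S' ⊆ M`). -/
theorem insert_before_delete_fail_closed {α : Type*} [DecidableEq α]
    (S S' : Finset α) (ins dels : List α)
    (hins : ins.Perm (S' \ S).toList)
    (hdels : dels.Perm (S \ S').toList)
    (ops : List (MapOp α))
    (hops : ops = ins.map MapOp.ins ++ dels.map MapOp.del) :
    (ops.foldl (fun M op => op.apply M) S = S') ∧
    (∀ M ∈ mapStates ops S, M ⊆ S ∪ S' ∧ (S ⊆ M ∨ S' ⊆ M)) := by
  subst hops
  have hins_toFinset : ins.toFinset = S' \ S := by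
    rw [List.toFinset_eq_of_perm _ _ hins, Finset.toList_toFinset]
  have hdels_toFinset : dels.toFinset = S \ S' := by
    rw [List.toFinset_eq_of_perm _ _ hdels, Finset.toList_toFinset]
  have hunion : S ∪ ins.toFinset = S ∪ S' := by
    rw [hins_toFinset, Finset.union_sdiff_self_eq_union]
  have hdiff : (S ∪ S') \ dels.toFinset = S' := by
    rw [hdels_toFinset, ← Finset.union_sdiff_right S S',
      sdiff_sdiff_eq_self Finset.subset_union_right]
  have hmid : (ins.map MapOp.ins).foldl (fun M op => op.apply M) S = S ∪ S' := by
    rw [MapOp.foldl_apply_map_ins, hunion]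
  refine ⟨by rw [List.foldl_append, hmid, MapOp.foldl_apply_map_del, hdiff], fun M hM => ?_⟩
  rcases MapOp.mem_or_mem_of_mem_mapStates_append hM with hM | hM
  · obtain ⟨hSM, hMS⟩ := MapOp.subset_and_subset_of_mem_mapStates_map_ins hM
    exact ⟨hunion ▸ hMS, .inl hSM⟩
  · rw [hmid] at hM
    obtain ⟨hSM, hMS⟩ := MapOp.subset_and_subset_of_mem_mapStates_map_del hM
    exact ⟨hMS, .inr (hdiff ▸ hSM)⟩
end

section
/- (Non-widening policy updates.) Model a combined enforcement state as a pair (G, N) where G is a set of grant-map entries and N is a set of internal-classifier prefixes (each prefix a set of IPs). Fix a predicate g(k, pid, dst) stating that entry k authorizes the pair (pid, dst), and for dst = (d, t, q) define allow_{(G,N)}(pid, dst) = true if d ∉ ⋃N, and otherwise allow_{(G,N)}(pid, dst) = true iff ∃ k ∈ G with g(k, pid, dst). Let (G_old, N_old) and (G_new, N_new) be the old and new states. Suppose every intermediate state (G_k, N_k) observed during the update satisfies G_k ⊆ G_old ∪ G_new and (N_old ⊆ N_k or N_new ⊆ N_k). Then for every (pid, dst): if allow_{(G_old,N_old)}(pid,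 dst) = false and allow_{(G_new,N_new)}(pid, dst) = false, then allow_{(G_k,N_k)}(pid, dst) = false at every intermediate state; equivalently, the intermediate allow set satisfies Allow(G_k, N_k) ⊆ Allow(G_old, N_old) ∪ Allow(G_new, N_new). In particular, no destination denied by both the old and new policies is transiently permitted during the update. -/
/-- A connection attempt: destination IP, transport protocol, and port. -/
structure ConnAttempt (IP T : Type*) where
  ip : IP
  proto : T
  port : ℕ

/-- Decision function of a combined enforcement state `(G, N)`:
allow if the destination IP is not classified internal (miss on the internal
classifier `N` means external passthrough), otherwise allow iff some grant-map
entry `k ∈ G` authorizes the pair (deny-biased semantics). -/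
def allowState {K PID IP T : Type*} (g : K → PID → ConnAttempt IP T → Prop)
    (G : Set K) (N : Set (Set IP)) (pid : PID) (dst : ConnAttempt IP T) : Prop :=
  dst.ip ∉ ⋃₀ N ∨ ∃ k ∈ G, g k pid dst

/-! An intermediate state can allow a pair only through a grant entry, which it inherits from the
old or the new grant map (and a grant allows whatever the classifier says), or through a
classifier miss, which it inherits from the old or the new classifier since it classifies at
least as much as one of them. -/

section

variable {K PID IP T : Type*} {g : K → PID → ConnAttempt IP T → Prop}
  {G : Set K} {N N' : Set (Set IP)} {pid : PID} {dst : ConnAttempt IP T}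

theorem allowState_of_grant {k : K} (hk : k ∈ G) (h : g k pid dst) :
    allowState g G N pid dst :=
  Or.inr ⟨k, hk, h⟩

theorem allowState_of_not_mem_sUnion_of_subset (hN : N ⊆ N') (h : dst.ip ∉ ⋃₀ N') :
    allowState g G N pid dst :=
  Or.inl fun hmem => h (Set.sUnion_mono hN hmem)

theorem allowState_of_intermediate {Gold Gnew Gk : Set K} {Nold Nnew Nk : Set (Set IP)}
    (hG : Gk ⊆ Gold ∪ Gnew) (hN : Nold ⊆ Nk ∨ Nnew ⊆ Nk) (h : allowState g Gk Nk pid dst) :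
    allowState g Gold Nold pid dst ∨ allowState g Gnew Nnew pid dst := by
  rcases h with hmiss | ⟨k, hk, hgrant⟩
  · rcases hN with hold | hnew
    · exact .inl (allowState_of_not_mem_sUnion_of_subset hold hmiss)
    · exact .inr (allowState_of_not_mem_sUnion_of_subset hnew hmiss)
  · rcases hG hk with hold | hnew
    · exact .inl (allowState_of_grant hold hgrant)
    · exact .inr (allowState_of_grant hnew hgrant)

end

/-- Non-widening policy updates.  If every intermediate state `(Gk, Nk)`
satisfies `Gk ⊆ Gold ∪ Gnew` and (`Nold ⊆ Nk` or `Nnew ⊆ Nk`), then no pair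
(pid, dst) denied by both the old and new policies is transiently permitted;
equivalently, the intermediate allow set is contained in the union of the old and
new allow sets. -/
theorem non_widening_update {K PID IP T : Type*}
    (g : K → PID → ConnAttempt IP T → Prop)
    (Gold Gnew Gk : Set K) (Nold Nnew Nk : Set (Set IP))
    (hG : Gk ⊆ Gold ∪ Gnew)
    (hN : Nold ⊆ Nk ∨ Nnew ⊆ Nk) :
    (∀ (pid : PID) (dst : ConnAttempt IP T),
        ¬ allowState g Gold Nold pid dst → ¬ allowState g Gnew Nnew pid dst →
          ¬ allowState g Gk Nk pid dst) ∧
    (∀ pid : PID,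
        {dst : ConnAttempt IP T | allowState g Gk Nk pid dst} ⊆
          {dst | allowState g Gold Nold pid dst} ∪
          {dst | allowState g Gnew Nnew pid dst}) :=
  ⟨fun _ _ hold hnew hk => (allowState_of_intermediate hG hN hk).elim hold hnew,
    fun _ _ hk => allowState_of_intermediate hG hN hk⟩
end
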